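/- Let (M,g) be a transverse Riemann-Lorentz space with tangent radical and singular hypersurface Σ, and let 𝒜,ℬ,𝒞,𝒟∈X(M) with restrictions A,B,C,D to Σ. (a) ⟨R(𝒜°,ℬ°)𝒞°,𝒟°⟩≅0 if and only if Υ(A,B,C,D)=0. (b) Consider the assertions: (1) for all A,B,C,D∈X_Σ, Υ(A,B,C,D)=0 whenever det[(ν(A),ν(B));(ρ(A),ρ(B))]·det[(ν(C),ν(D));(ρ(C),ρ(D))]=0; (2) Σ is II-flat; (3) for all A,B,C,D∈X_Σ, Υ(A,B,C,D)=0 implies det[(ν(A),ν(B));(ρ(A),ρ(B))]·det[(ν(C),ν(D));(ρ(C),ρ(D))]=0. Then (1)⇔(2)⇒(3). -/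
import Mathlib


/-!
Axiomatic model of a transverse Riemann-Lorentz space with tangent radical,
following Aguirre-Daban & Lafuente-Lopez, "Transverse Riemann-Lorentz metrics
with tangent radical".

`CS` models `C^inf(Sigma)`, `CM` models `C^inf(M)`, `XS` models the tangent
vectorfields `X(Sigma)`, `XA` models the vectorfields along `Sigma` (`X_Sigma`),
`XM` models `X(M)`; `Pt` is the set of points of `Sigma` and `Tp p` models `T_p M`.
-/
structure RLData (CS CM XS XA XM : Type) [CommRing CS] [CommRing CM]
    [AddCommGroup XS] [Module CS XS] [AddCommGroup XA] [Module CS XA]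
    [AddCommGroup XM] [Module CM XM] (Pt : Type) (Tp : Pt → Type) : Type where
  /-- inclusion `X(Σ) ⊆ X_Σ` -/
  iota : XS →ₗ[CS] XA
  iota_inj : Function.Injective iota
  /-- Lie bracket on `X(Σ)` -/
  bra : XS → XS → XS
  /-- action of tangent fields on functions, `X(f)` -/
  act : XS → CS → CS
  act_add : ∀ X f g, act X (f + g) = act X f + act X g
  act_mul : ∀ X f g, act X (f * g) = act X f * g + f * act X g
  act_smul : ∀ (f : CS) X h, act (f • X) h = f * act X h
  /-- the (degenerate) metric along `Σ` -/
  gS : XA →ₗ[CS] XA →ₗ[CS] CS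
  gS_symm : ∀ A B, gS A B = gS B A
  /-- the restricted dual connection `□_X A (C)` -/
  sq : XS → XA → XA →ₗ[CS] CS
  sq_smul1 : ∀ (f : CS) X A, sq (f • X) A = f • sq X A
  sq_add1 : ∀ X X' A, sq (X + X') A = sq X A + sq X' A
  sq_add2 : ∀ X A A', sq X (A + A') = sq X A + sq X A'
  sq_leib : ∀ X (f : CS) A C, sq X (f • A) C = act X f * gS A C + f * sq X A C
  /-- torsion-free: `□_X Y(C) - □_Y X(C) = ⟨[X,Y],C⟩` -/
  sq_tor : ∀ X Y C, sq X (iota Y) C - sq Y (iota X) C = gS (iota (bra X Y)) C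
  /-- metric: `□_X A(B) + □_X B(A) = X⟨A,B⟩` -/
  sq_met : ∀ X A B, sq X A B + sq X B A = act X (gS A B)
  /-- the radical is tangent -/
  rad_tan : ∀ A : XA, (∀ B, gS A B = 0) → ∃ X : XS, A = iota X
  /-- the main normal `N` -/
  N : XA
  gN_tan : ∀ X : XS, gS N (iota X) = 0
  /-- Riemann-to-Lorentz signature change: `⟨N,N⟩ = 1` -/
  gNN : gS N N = 1
  /-- the main radical vectorfield `R` -/
  R : XS
  R_rad : ∀ A : XA, gS (iota R) A = 0
  /-- `H(R,R) = -1` -/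
  HRR : sq R (iota R) N = -1
  /-- `II`, as a symmetric bilinear form on `X_Σ` -/
  II : XA →ₗ[CS] XA →ₗ[CS] CS
  II_symm : ∀ A B, II A B = II B A
  II_sq : ∀ X A, II (iota X) A = sq X A (iota R)
  II_NN : II N N = 0
  II_NX : ∀ X : XS, II N (iota X) = -(sq X (iota R) N)
  /-- `ρ` and the screen part of the decomposition `A = ν(A)N + A^S + ρ(A)R` -/
  rho : XA →ₗ[CS] CS
  sP : XA → XS
  sP_scr : ∀ A, sq (sP A) (iota R) N = 0
  decomp : ∀ A : XA, A = gS A N • N + iota (sP A) + rho A • iota R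
  decomp_unique : ∀ (a r : CS) (s : XS), sq s (iota R) N = 0 →
    a • N + iota s + r • iota R = 0 → a = 0 ∧ s = 0 ∧ r = 0
  rho_tan : ∀ X : XS, rho (iota X) = -(sq X (iota R) N)
  /-- the metric is nondegenerate on the screen distribution -/
  scr_nondeg : ∀ s : XS, sq s (iota R) N = 0 →
    (∀ V : XS, sq V (iota R) N = 0 → gS (iota s) (iota V) = 0) → s = 0
  /-- an element `½ ∈ C^∞(Σ)` -/
  half : CS
  half_add : half + half = 1
  /-- the screen connection-operator `D^S` -/
  DS : XS → XA → XS
  DS_scr : ∀ X A, sq (DS X A) (iota R) N = 0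
  DS_def : ∀ X A (V : XS), sq V (iota R) N = 0 →
    gS (iota (DS X A)) (iota V) = sq X A (iota V)
  /-- restriction of functions and of vectorfields -/
  rF : CM →+* CS
  rV : XM → XA
  rV_add : ∀ A B : XM, rV (A + B) = rV A + rV B
  rV_smul : ∀ (f : CM) (A : XM), rV (f • A) = rF f • rV A
  /-- the metric on `M` -/
  gM : XM →ₗ[CM] XM →ₗ[CM] CM
  gM_symm : ∀ A B, gM A B = gM B A
  gM_res : ∀ A B, rF (gM A B) = gS (rV A) (rV B)
  gM_nondeg : ∀ D : XM, (∀ C, gM D C = 0) → D = 0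
  /-- Lie bracket on `M` -/
  brM : XM → XM → XM
  /-- canonical extension (by the flow of the canonical geodesic extension of `N`) -/
  cext : XA → XM
  cext_res : ∀ A, rV (cext A) = A
  cext_comm : ∀ A, brM (cext N) (cext A) = 0
  cext_unique : ∀ (A : XA) (E : XM), rV E = A → brM (cext N) E = 0 → E = cext A
  /-- `τ = ⟨ℛ,ℛ⟩`, an equation for `Σ` -/
  tau : CM
  tau_eq : tau = gM (cext (iota R)) (cext (iota R))
  tau_ideal : ∀ f : CM, rF f = 0 → ∃ k, f = k * tau
  tau_reg : ∀ k k' : CM, k * tau = k' * tau → k = k'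
  /-- the dual connection on `M` -/
  sqM : XM → XM → XM →ₗ[CM] CM
  sqM_res : ∀ (X : XS) (A B C : XM), rV A = iota X →
    rF (sqM A B C) = sq X (rV B) (rV C)
  sqM_II : ∀ A B : XM, rF (sqM A B (cext (iota R))) = II (rV A) (rV B)
  /-- `Υ` : the everywhere-regular (0,4)-tensorfield with
  `⟨R(𝒜°,ℬ°)𝒞°,𝒟°⟩ = τ⁻¹ Υ(𝒜°,ℬ°,𝒞°,𝒟°)` on `M - Σ` -/
  Ups : XM → XM → XM → XM → CM
  Ups_anti : ∀ A B C D, Ups A B C D = -Ups B A C D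
  Ups_pair : ∀ A B C D, Ups A B C D = Ups C D A B
  Ups_res : ∀ A B C D, rF (Ups A B C D) =
    II (rV A) (rV C) * II (rV B) (rV D) - II (rV A) (rV D) * II (rV B) (rV C)
  /-- evaluation of vectorfields and of functions at points of `Σ` -/
  evV : (p : Pt) → XA → Tp p
  evF : Pt → CS →+* ℝ
  evF_faithful : ∀ f : CS, (∀ p, evF p f = 0) → f = 0
  /-- the screen bundle is riemannian -/
  scr_pos : ∀ V : XS, sq V (iota R) N = 0 → ∀ p : Pt, 0 ≤ evF p (gS (iota V) (iota V))

namespace RLData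

variable {CS CM XS XA XM : Type} [CommRing CS] [CommRing CM]
  [AddCommGroup XS] [Module CS XS] [AddCommGroup XA] [Module CS XA]
  [AddCommGroup XM] [Module CM XM] {Pt : Type} {Tp : Pt → Type}
  (d : RLData CS CM XS XA XM Pt Tp)

/-- membership in the canonical screen distribution: `H(V,R) = 0` -/
def scr (V : XS) : Prop := d.sq V (d.iota d.R) d.N = 0

/-- the second fundamental form `H(X,Y) = □_X Y (N)` -/
def H (X Y : XS) : CS := d.sq X (d.iota Y) d.N

/-- `ν(A) = ⟨A,N⟩` -/
def nu (A : XA) : CS := d.gS A d.N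

/-- `Σ` is `II`-flat -/
def IIflat : Prop := ∀ V W : XS, d.scr V → d.scr W → d.II (d.iota V) (d.iota W) = 0

/-- `Σ` is `H`-flat -/
def Hflat : Prop := ∀ V W : XS, d.scr V → d.scr W → d.H V W = 0

/-- `Σ` is `III`-flat -/
def IIIflat : Prop := d.IIflat ∧ d.Hflat

/-- `dρ(X,Y)` -/
def drho (X Y : XS) : CS :=
  d.act X (d.rho (d.iota Y)) - d.act Y (d.rho (d.iota X)) - d.rho (d.iota (d.bra X Y))

/-- the main connection `D̃_X Y = D^S_X Y + X(ρ(Y))·R` -/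
def Dt (X Y : XS) : XS := d.DS X (d.iota Y) + d.act X (d.rho (d.iota Y)) • d.R

/-- the main admissible connection `Ḋ_X Y = D̃_X Y - ½ dρ(X,Y)·R` -/
def Dd (X Y : XS) : XS := d.Dt X Y - (d.half * d.drho X Y) • d.R

/-- being a (Koszul) connection on `Σ` -/
def IsConn (D : XS → XS → XS) : Prop :=
  (∀ (f : CS) X Y, D (f • X) Y = f • D X Y) ∧
  (∀ X X' Y, D (X + X') Y = D X Y + D X' Y) ∧
  (∀ X Y Y', D X (Y + Y') = D X Y + D X Y') ∧
  (∀ (f : CS) X Y, D X (f • Y) = d.act X f • Y + f • D X Y)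

/-- torsion-free connection on `Σ` -/
def TorsionFree (D : XS → XS → XS) : Prop := ∀ X Y, D X Y - D Y X = d.bra X Y

/-- metric connection on `Σ` -/
def MetricConn (D : XS → XS → XS) : Prop := ∀ X Y Z,
  d.gS (d.iota (D X Y)) (d.iota Z) + d.gS (d.iota Y) (d.iota (D X Z)) =
    d.act X (d.gS (d.iota Y) (d.iota Z))

/-- admissible connection on `Σ`: torsion-free and compatible with `D^S`,
i.e. `⟨D_X Y, V⟩ = □_X Y(V)` for `V ∈ Γ(S)` -/
def Admissible (D : XS → XS → XS) : Prop :=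
  d.IsConn D ∧ d.TorsionFree D ∧
    ∀ X Y (V : XS), d.scr V →
      d.gS (d.iota (D X Y)) (d.iota V) = d.sq X (d.iota Y) (d.iota V)

/-- curvature of a connection on `Σ` -/
def curv (D : XS → XS → XS) (X Y Z : XS) : XS :=
  D X (D Y Z) - D Y (D X Z) - D (d.bra X Y) Z

/-- `det [(ν(A),ν(B)),(ρ(A),ρ(B))]` -/
def detNP (A B : XA) : CS := d.nu A * d.rho B - d.nu B * d.rho A

/-- the matrix `[(ν(A),ν(B)),(ρ(A),ρ(B))]` vanishes -/
def matZero (A B : XA) : Prop := d.nu A = 0 ∧ d.nu B = 0 ∧ d.rho A = 0 ∧ d.rho B = 0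

/-- `Υ` restricted to `Σ`: `Υ(A,B,C,D) = II(A,C)II(B,D) - II(A,D)II(B,C)` -/
def UpsS (A B C E : XA) : CS := d.II A C * d.II B E - d.II A E * d.II B C

/-- `∇_{𝒜°}ℬ°` has a good limit on `Σ`: there is a vectorfield `𝒟` on `M`
with `⟨𝒟,·⟩ = □_𝒜 ℬ(·)` (off `Σ` this says `𝒟 = ∇_𝒜 ℬ`) -/
def nablaGood (A B : XM) : Prop := ∃ D : XM, ∀ C, d.gM D C = d.sqM A B C

/-- `∇_A B` is well-defined for `A, B ∈ X_Σ`: the limit exists for all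
extensions and its restriction to `Σ` depends only on `A`, `B` -/
def nablaWD (A B : XA) : Prop :=
  (∀ A' B' : XM, d.rV A' = A → d.rV B' = B → d.nablaGood A' B') ∧
  (∀ (A₁ B₁ A₂ B₂ D₁ D₂ : XM), d.rV A₁ = A → d.rV B₁ = B → d.rV A₂ = A → d.rV B₂ = B →
    (∀ C, d.gM D₁ C = d.sqM A₁ B₁ C) → (∀ C, d.gM D₂ C = d.sqM A₂ B₂ C) →
    d.rV D₁ = d.rV D₂)

/-- Gram determinant `det (g_{A∧B})` on `M` -/
def gramM (A B : XM) : CM := d.gM A A * d.gM B B - d.gM A B * d.gM A B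

/-- Gram determinant `det (g_{A∧B})` along `Σ` -/
def gramS (A B : XA) : CS := d.gS A A * d.gS B B - d.gS A B * d.gS A B

/-- `⟨R(A,B)C,E⟩` is well-defined for `A,B,C,E ∈ X_Σ`: the limit
`τ⁻¹ Υ(𝒜,ℬ,𝒞,ℰ)` exists for all extensions and its restriction to `Σ`
depends only on `A,B,C,E` -/
def curvWD (A B C E : XA) : Prop :=
  (∀ A' B' C' E' : XM, d.rV A' = A → d.rV B' = B → d.rV C' = C → d.rV E' = E →
    ∃ k, d.Ups A' B' C' E' = k * d.tau) ∧
  (∀ (A₁ B₁ C₁ E₁ A₂ B₂ C₂ E₂ : XM) (k₁ k₂ : CM),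
    d.rV A₁ = A → d.rV B₁ = B → d.rV C₁ = C → d.rV E₁ = E →
    d.rV A₂ = A → d.rV B₂ = B → d.rV C₂ = C → d.rV E₂ = E →
    d.Ups A₁ B₁ C₁ E₁ = k₁ * d.tau → d.Ups A₂ B₂ C₂ E₂ = k₂ * d.tau →
    d.rF k₁ = d.rF k₂)

/-- `⟨R(A,B)A,B⟩` is well-defined and vanishes -/
def curvWD0 (A B : XA) : Prop :=
  d.curvWD A B A B ∧
  ∀ (A' B' : XM) (k : CM), d.rV A' = A → d.rV B' = B →
    d.Ups A' B' A' B' = k * d.tau → d.rF k = 0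

/-- `K_{A∧B}` is well-defined (case `rank (g_{A∧B}) = 2`) -/
def secWD (A B : XA) : Prop :=
  (∀ A' B' : XM, d.rV A' = A → d.rV B' = B → IsUnit (d.gramM A' B') →
    ∃ k, d.Ups A' B' A' B' = k * d.tau) ∧
  (∀ (A₁ B₁ A₂ B₂ : XM) (k₁ k₂ : CM),
    d.rV A₁ = A → d.rV B₁ = B → d.rV A₂ = A → d.rV B₂ = B →
    IsUnit (d.gramM A₁ B₁) → IsUnit (d.gramM A₂ B₂) →
    d.Ups A₁ B₁ A₁ B₁ = k₁ * d.tau → d.Ups A₂ B₂ A₂ B₂ = k₂ * d.tau →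
    d.rF k₁ = d.rF k₂)

/-- `rank (g_{A∧B}) = 1` and `R ∈ A∧B` -/
def rank1R (A B : XA) : Prop :=
  d.gramS A B = 0 ∧
  (∀ p : Pt, ¬(d.evF p (d.gS A A) = 0 ∧ d.evF p (d.gS A B) = 0 ∧ d.evF p (d.gS B B) = 0)) ∧
  ∃ f h : CS, d.iota d.R = f • A + h • B

/-- `K_{A∧B}` is well-defined (case `rank (g_{A∧B}) = 1`, `R ∈ A∧B`):
here `K = (τ⁻¹⟨R(𝒜,ℬ)𝒜,ℬ⟩)/(τ⁻¹ det g_{𝒜∧ℬ}) = (τ⁻²Υ)/k`; the limit must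
exist for all extensions and the value (here compared cross-multiplied,
`j₁/k₁ = j₂/k₂`) must depend only on `A,B` -/
def secWD1 (A B : XA) : Prop :=
  (∀ A' B' : XM, d.rV A' = A → d.rV B' = B →
    (∃ k, IsUnit k ∧ d.gramM A' B' = k * d.tau) →
    ∃ j, d.Ups A' B' A' B' = j * d.tau * d.tau) ∧
  (∀ (A₁ B₁ A₂ B₂ : XM) (k₁ k₂ j₁ j₂ : CM),
    d.rV A₁ = A → d.rV B₁ = B → d.rV A₂ = A → d.rV B₂ = B →
    d.gramM A₁ B₁ = k₁ * d.tau → IsUnit k₁ →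
    d.gramM A₂ B₂ = k₂ * d.tau → IsUnit k₂ →
    d.Ups A₁ B₁ A₁ B₁ = j₁ * d.tau * d.tau →
    d.Ups A₂ B₂ A₂ B₂ = j₂ * d.tau * d.tau →
    d.rF j₁ * d.rF k₂ = d.rF j₂ * d.rF k₁)

/-- the tangential connection `∇^Σ_X Y = ∇_𝒳 𝒴|_Σ - ν(∇_𝒳 𝒴|_Σ)·N`,
computed with the canonical extensions `𝒳, 𝒴` -/
def IsTangConn (nab : XS → XS → XS) : Prop :=
  ∀ X Y : XS, ∃ DXY : XM,
    (∀ C, d.gM DXY C = d.sqM (d.cext (d.iota X)) (d.cext (d.iota Y)) C) ∧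
    d.iota (nab X Y) = d.rV DXY - d.gS (d.rV DXY) d.N • d.N

/-- `τ²·Ric(𝒜°,ℬ°)`, computed in an adapted frame
`(E 0, …, E (m-1), E m) = (𝒩, E₁, …, ℛ)`:
`Ric(𝒜°,ℬ°) = Σ_{i<m} τ⁻¹Υ(𝒜,Eᵢ,ℬ,Eᵢ) + τ⁻²Υ(𝒜,ℛ,ℬ,ℛ)` -/
def RicRep (m : ℕ) (E : Fin (m + 1) → XM) (A B : XM) : CM :=
  d.tau * (∑ i ∈ Finset.univ.erase (Fin.last m), d.Ups A (E i) B (E i)) +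
    d.Ups A (d.cext (d.iota d.R)) B (d.cext (d.iota d.R))

/-- `Ric(𝒜°,ℬ°) ≅ 0`, i.e. the Ricci curvature extends smoothly across `Σ` -/
def RicGood (m : ℕ) (E : Fin (m + 1) → XM) (A B : XM) : Prop :=
  ∃ k, d.RicRep m E A B = k * d.tau * d.tau

/-- `Ric(A,B)` is well-defined for `A,B ∈ X_Σ` -/
def RicWD (m : ℕ) (E : Fin (m + 1) → XM) (A B : XA) : Prop :=
  (∀ A' B' : XM, d.rV A' = A → d.rV B' = B → d.RicGood m E A' B') ∧
  (∀ (A₁ B₁ A₂ B₂ : XM) (k₁ k₂ : CM),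
    d.rV A₁ = A → d.rV B₁ = B → d.rV A₂ = A → d.rV B₂ = B →
    d.RicRep m E A₁ B₁ = k₁ * d.tau * d.tau →
    d.RicRep m E A₂ B₂ = k₂ * d.tau * d.tau →
    d.rF k₁ = d.rF k₂)

end RLData

section Aux

namespace RLData

variable {CS CM XS XA XM : Type} [CommRing CS] [CommRing CM]
  [AddCommGroup XS] [Module CS XS] [AddCommGroup XA] [Module CS XA]
  [AddCommGroup XM] [Module CM XM] {Pt : Type} {Tp : Pt → Type}
  (d : RLData CS CM XS XA XM Pt Tp)

lemma act_zero (X : XS) : d.act X 0 = 0 := by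
  have h := d.act_add X 0 0
  simpa using h.symm

include d in
lemma half_cancel {x : CS} (h : x + x = 0) : x = 0 := by
  have : x = d.half * (x + x) := by
    rw [mul_add]
    calc x = 1 * x := (one_mul x).symm
    _ = (d.half + d.half) * x := by rw [d.half_add]
    _ = d.half * x + d.half * x := by ring
  rw [h, mul_zero] at this
  exact this

lemma sq_RR_self (X : XS) : d.sq X (d.iota d.R) (d.iota d.R) = 0 := by
  have h := d.sq_met X (d.iota d.R) (d.iota d.R)
  rw [d.R_rad, d.act_zero] at h
  exact d.half_cancel h

lemma II_iota_R (X : XS) : d.II (d.iota X) (d.iota d.R) = d.sq X (d.iota d.R) (d.iota d.R) := by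
  rw [d.II_sq]

lemma II_iota_R_zero (X : XS) : d.II (d.iota X) (d.iota d.R) = 0 := by
  rw [d.II_iota_R, d.sq_RR_self]

lemma rho_N_zero : d.rho d.N = 0 := by
  have h := d.decomp d.N
  rw [d.gNN, one_smul] at h
  have h1 : (0 : XA) = d.iota (d.sP d.N) + d.rho d.N • d.iota d.R := by
    have h2 : d.N + 0 = d.N + (d.iota (d.sP d.N) + d.rho d.N • d.iota d.R) := by
      rw [add_zero, ← add_assoc]; exact h
    exact add_left_cancel h2
  have h0 : (0 : CS) • d.N + d.iota (d.sP d.N) + d.rho d.N • d.iota d.R = 0 := by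
    rw [zero_smul, zero_add, ← h1]
  exact (d.decomp_unique 0 (d.rho d.N) (d.sP d.N) (d.sP_scr d.N) h0).2.2

lemma nu_N_one : d.nu d.N = 1 := d.gNN

lemma nu_iota_zero (X : XS) : d.nu (d.iota X) = 0 := by
  unfold nu
  rw [d.gS_symm, d.gN_tan]

lemma rho_scr_zero {V : XS} (hV : d.scr V) : d.rho (d.iota V) = 0 := by
  rw [d.rho_tan, hV, neg_zero]

lemma rho_R_one : d.rho (d.iota d.R) = 1 := by
  rw [d.rho_tan, d.HRR]; ring

lemma II_N_scr {V : XS} (hV : d.scr V) : d.II d.N (d.iota V) = 0 := by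
  rw [d.II_NX, hV, neg_zero]

lemma II_N_R : d.II d.N (d.iota d.R) = 1 := by
  rw [d.II_NX, d.HRR]; ring

/-- key expansion: `II(A,B) = ν(A)ρ(B) + ρ(A)ν(B) + II(A^S, B^S)` -/
lemma II_expand (A B : XA) :
    d.II A B = d.nu A * d.rho B + d.rho A * d.nu B
      + d.II (d.iota (d.sP A)) (d.iota (d.sP B)) := by
  conv_lhs => rw [d.decomp A, d.decomp B]
  have hsA := d.sP_scr A
  have hsB := d.sP_scr B
  simp only [map_add, map_smul, LinearMap.add_apply, LinearMap.smul_apply, smul_eq_mul,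
    d.II_NN, d.II_N_R, d.II_N_scr hsB, d.II_iota_R_zero, d.rho_R_one]
  rw [d.II_symm (d.iota (d.sP A)) d.N, d.II_symm (d.iota d.R) d.N,
    d.II_symm (d.iota d.R) (d.iota (d.sP B))]
  simp only [d.II_N_scr hsA, d.II_N_R, d.II_iota_R_zero]
  show _ = d.gS A d.N * d.rho B + d.rho A * d.gS B d.N + _
  ring

lemma rF_tau_zero : d.rF d.tau = 0 := by
  rw [d.tau_eq, d.gM_res, d.cext_res, d.R_rad]

lemma rF_Ups (A B C E : XM) :
    d.rF (d.Ups A B C E) = d.UpsS (d.rV A) (d.rV B) (d.rV C) (d.rV E) := d.Ups_res A B C E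

lemma II_of_IIflat (h : d.IIflat) (A B : XA) :
    d.II A B = d.nu A * d.rho B + d.rho A * d.nu B := by
  rw [d.II_expand, h _ _ (d.sP_scr A) (d.sP_scr B), add_zero]

lemma UpsS_of_IIflat (h : d.IIflat) (A B C E : XA) :
    d.UpsS A B C E = -(d.detNP A B * d.detNP C E) := by
  unfold UpsS detNP
  rw [d.II_of_IIflat h, d.II_of_IIflat h, d.II_of_IIflat h, d.II_of_IIflat h]
  ring

end RLData

end Aux

/-- (a) `⟨R(𝒜°,ℬ°)𝒞°,𝒟°⟩ ≅ 0` iff `Υ(A,B,C,D) = 0`;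
(b) with (1) `Υ(A,B,C,D) = 0` whenever `det[(ν,ν),(ρ,ρ)](A,B)·det[(ν,ν),(ρ,ρ)](C,D) = 0`,
(2) `Σ` is `II`-flat, (3) the converse implication, one has (1) ⇔ (2) ⇒ (3). -/
theorem stmt10
    {CS CM XS XA XM : Type} [CommRing CS] [CommRing CM]
    [AddCommGroup XS] [Module CS XS] [AddCommGroup XA] [Module CS XA]
    [AddCommGroup XM] [Module CM XM] {Pt : Type} {Tp : Pt → Type}
    (d : RLData CS CM XS XA XM Pt Tp) :
    (∀ A B C E : XM,
      (∃ k, d.Ups A B C E = k * d.tau) ↔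
        d.UpsS (d.rV A) (d.rV B) (d.rV C) (d.rV E) = 0) ∧
    ((∀ A B C E : XA, d.detNP A B * d.detNP C E = 0 → d.UpsS A B C E = 0) ↔ d.IIflat) ∧
    (d.IIflat →
      ∀ A B C E : XA, d.UpsS A B C E = 0 → d.detNP A B * d.detNP C E = 0) := by
  refine ⟨?_, ?_, ?_⟩
  · intro A B C E
    constructor
    · rintro ⟨k, hk⟩
      have := congrArg d.rF hk
      rwa [d.rF_Ups, map_mul, d.rF_tau_zero, mul_zero] at this
    · intro h
      apply d.tau_ideal
      rw [d.rF_Ups, h]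
  · constructor
    · intro h V W hV hW
      have key := h (d.iota V) d.N (d.iota W) (d.iota d.R) ?_
      · have : d.UpsS (d.iota V) d.N (d.iota W) (d.iota d.R) = d.II (d.iota V) (d.iota W) := by
          unfold RLData.UpsS
          rw [d.II_iota_R_zero, d.II_N_scr hW, d.II_N_R]
          ring
        rw [this] at key
        exact key
      · unfold RLData.detNP
        rw [d.nu_iota_zero, d.rho_N_zero, d.nu_N_one, d.rho_scr_zero hV]
        ring
    · intro h A B C E hdet
      rw [d.UpsS_of_IIflat h, hdet, neg_zero]
  · intro h A B C E hU
    rw [d.UpsS_of_IIflat h] at hU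
    exact neg_eq_zero.mp hU
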